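/- Let q ≥ 2 be an integer and let n be a positive integer with n ≤ q² + 3q − 2. Let T = C_{1/q} = {0, ∞} ∪ {k : k ∈ ℤ, 1 ≤ |k| ≤ q−1} ∪ {1/k : k ∈ ℤ, 1 ≤ |k| ≤ q−1} ∪ {−1/q, −q, 1/q}. Then any two functions f, g : ℤ² → ℝ that are T-clue-equivalent on I_{n,n} agree at every point of I_{n,n}; equivalently, every solvable n × n RK puzzle with clue slopes T has a unique solution. -/

import Mathlib

open Classical

/-- A slope is an element of `ℚ ∪ {∞}`; `none` denotes `∞`. -/
abbrev Slope := Option ℚ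

/-- The clue of `f` along the line of slope `s` (vertical line `x = c` when `s = ∞ = none`,
and the line `y = r·x + c` when `s = some r`), with respect to the grid
`I_{n,m} = {1,…,n} × {1,…,m} ⊆ ℤ²`: the sum of `f` over the grid points lying on the line. -/
noncomputable def clueSum (n m : ℕ) (s : Slope) (c : ℝ) (f : ℤ × ℤ → ℝ) : ℝ :=
  ∑ p ∈ (Finset.Icc (1 : ℤ) n ×ˢ Finset.Icc (1 : ℤ) m).filter
      (fun p => match s with
        | none => (p.1 : ℝ) = c
        | some r => (p.2 : ℝ) = (r : ℝ) * (p.1 : ℝ) + c),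
    f p

/-- `f` and `g` are `T`-clue-equivalent on `I_{n,m}`: for every slope `s ∈ T` and every line
of slope `s`, the clues of `f` and `g` along that line agree. -/
def ClueEquiv (n m : ℕ) (T : Set Slope) (f g : ℤ × ℤ → ℝ) : Prop :=
  ∀ s ∈ T, ∀ c : ℝ, clueSum n m s c f = clueSum n m s c g

/-- The entry `p ∈ I_{n,m}` is uniquely solvable with respect to the slope set `T`. -/
def UniqSolv (n m : ℕ) (T : Set Slope) (p : ℤ × ℤ) : Prop :=
  ∀ f g : ℤ × ℤ → ℝ, ClueEquiv n m T f g → f p = g p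

/-- The slope set `C_{1/q} = {0, ∞} ∪ {±k, ±1/k : 1 ≤ k ≤ q−1} ∪ {−1/q, −q, 1/q}`. -/
def CposInvQ (q : ℕ) : Set Slope :=
  ({some 0, none} ∪
    {s | ∃ k : ℤ, 1 ≤ |k| ∧ |k| ≤ (q : ℤ) - 1 ∧ (s = some (k : ℚ) ∨ s = some (1 / (k : ℚ)))}) ∪
  {some (-(1 / (q : ℚ))), some (-(q : ℚ)), some (1 / (q : ℚ))}

/-!
Let `h` be `f - g` on the grid and `0` elsewhere. For every slope `r` of the slope set, `h` is a
ghost in the primitive direction `(r.den, r.num)`: its sums along all lines of that direction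
vanish. A finitely supported ghost of direction `d` living in a vertical strip of width `N` equals
`h' (· - d) - h'`, where `h'` sums `h` along forward rays of direction `d` and lives in a strip of
width `N - d.1`. The line sums of `h'` in any other direction `e` are invariant under translation
by `d`, and a `d`-orbit meets only finitely many `e`-lines through the support of `h'`, so `h'` is
again a ghost in direction `e`. Peeling off the directions one at a time narrows the strip by
`∑ r.den = q² + 3q - 2 ≥ n` in total, so `h = 0`.
-/

open Function Set

noncomputable def lineSum {M : Type*} [AddCommMonoid M] (d : ℤ × ℤ) (h : ℤ × ℤ → M)
    (p : ℤ × ℤ) : M :=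
  ∑ᶠ k : ℤ, h (p + k • d)

def IsGhost {M : Type*} [AddCommMonoid M] (d : ℤ × ℤ) (h : ℤ × ℤ → M) : Prop :=
  ∀ p, lineSum d h p = 0

def SupportedInStrip {M : Type*} [Zero M] (N : ℤ) (h : ℤ × ℤ → M) : Prop :=
  ∀ p, h p ≠ 0 → 0 < p.1 ∧ p.1 ≤ N

def cross (d e : ℤ × ℤ) : ℤ := d.1 * e.2 - d.2 * e.1

lemma injective_smul_add_smul {d e : ℤ × ℤ} (hde : cross d e ≠ 0) :
    Injective fun mk : ℤ × ℤ => mk.1 • d + mk.2 • e := by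
  rintro ⟨m, k⟩ ⟨m', k'⟩ h
  simp only [Prod.ext_iff, Prod.fst_add, Prod.snd_add, Prod.smul_fst, Prod.smul_snd,
    smul_eq_mul] at h
  have hm : (m - m') * cross d e = 0 := by unfold cross; linear_combination e.2 * h.1 - e.1 * h.2
  have hk : (k - k') * cross d e = 0 := by unfold cross; linear_combination d.1 * h.2 - d.2 * h.1
  simp only [mul_eq_zero, sub_eq_zero, hde, or_false] at hm hk
  rw [hm, hk]

section

variable {M : Type*} [AddCommGroup M]

lemma finite_support_comp_line {d : ℤ × ℤ} (hd : d ≠ 0) {h : ℤ × ℤ → M}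
    (hfin : h.support.Finite) (p : ℤ × ℤ) : (support fun k : ℤ => h (p + k • d)).Finite :=
  hfin.preimage ((add_right_injective p).comp (smul_left_injective ℤ hd)).injOn

lemma lineSum_sub_shift {d e : ℤ × ℤ} (he : e ≠ 0) {h : ℤ × ℤ → M} (hfin : h.support.Finite)
    (p : ℤ × ℤ) :
    lineSum e (fun x => h (x - d) - h x) p = lineSum e h (p - d) - lineSum e h p := by
  rw [lineSum, lineSum, lineSum, ← finsum_sub_distrib (finite_support_comp_line he hfin _)
    (finite_support_comp_line he hfin p)]
  simp only [sub_add_eq_add_sub]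

lemma IsGhost.of_eq_sub_shift {d e : ℤ × ℤ} (hde : cross d e ≠ 0) {h h' : ℤ × ℤ → M}
    (hfin' : h'.support.Finite) (hrel : ∀ p, h p = h' (p - d) - h' p) (hghost : IsGhost e h) :
    IsGhost e h' := by
  have he : e ≠ 0 := by rintro rfl; simp [cross] at hde
  have hh : h = fun x => h' (x - d) - h' x := funext hrel
  intro p
  set F : ℤ → M := fun m => lineSum e h' (p + m • d)
  have hper : Periodic F 1 := fun m => by
    have := hghost (p + (m + 1) • d)
    rw [hh, lineSum_sub_shift he hfin', sub_eq_zero] at this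
    simp only [F]
    rw [← this, add_smul, one_smul, ← add_assoc, add_sub_cancel_right]
  have hfinF : F.support.Finite := by
    refine ((hfin'.preimage ((add_right_injective p).comp
      (injective_smul_add_smul hde)).injOn).image Prod.fst).subset fun m hm => ?_
    obtain ⟨k, hk⟩ : ∃ k : ℤ, h' (p + m • d + k • e) ≠ 0 := by
      by_contra! hall
      exact hm (finsum_eq_zero_of_forall_eq_zero hall)
    exact ⟨(m, k), by simpa [add_assoc] using hk, rfl⟩
  obtain ⟨m, hm⟩ := hfinF.exists_notMem
  have h0 : F 0 = F m := by simpa using (hper.zsmul_eq m).symm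
  simpa [F] using h0.trans (notMem_support.1 hm)

noncomputable def raySum (d : ℤ × ℤ) (h : ℤ × ℤ → M) (p : ℤ × ℤ) : M :=
  ∑ᶠ k ∈ Ioi (0 : ℤ), h (p + k • d)

lemma raySum_sub_self {d : ℤ × ℤ} (hd : d ≠ 0) {h : ℤ × ℤ → M} (hfin : h.support.Finite)
    (p : ℤ × ℤ) : raySum d h (p - d) = h p + raySum d h p := by
  have hshift : raySum d h (p - d) = ∑ᶠ k ∈ Ici (0 : ℤ), h (p + k • d) := by
    have himage : (fun k : ℤ => k - 1) '' Ioi 0 = Ici 0 := by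
      rw [image_sub_const_Ioi]; ext k; simp only [mem_Ioi, mem_Ici]; omega
    rw [raySum, ← himage, finsum_mem_image sub_left_injective.injOn]
    simp only [sub_smul, one_smul, sub_add_eq_add_sub, add_sub_assoc']
  rw [hshift, ← Ioi_insert, finsum_mem_insert' _ self_notMem_Ioi
    ((finite_support_comp_line hd hfin p).inter_of_right _), zero_smul, add_zero, raySum]

lemma supportedInStrip_raySum {d : ℤ × ℤ} (hd : 0 < d.1) {N : ℤ} {h : ℤ × ℤ → M}
    (hstrip : SupportedInStrip N h) (hghost : IsGhost d h) :
    SupportedInStrip (N - d.1) (raySum d h) := by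
  intro p hp
  constructor
  · -- left of the strip, the ray sum is the whole line sum
    by_contra! hp1
    have hsub : (support fun k : ℤ => h (p + k • d)) ⊆ Ioi 0 := fun k hk => by
      have := (hstrip _ hk).1
      simp only [Prod.fst_add, Prod.smul_fst, smul_eq_mul] at this
      exact mem_Ioi.2 (by nlinarith)
    exact hp (by rw [raySum, finsum_mem_def, indicator_eq_self.2 hsub]; exact hghost p)
  · obtain ⟨k, hk : 0 < k, hne⟩ := exists_ne_zero_of_finsum_mem_ne_zero hp
    have := (hstrip _ hne).2
    simp only [Prod.fst_add, Prod.smul_fst, smul_eq_mul] at this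
    nlinarith

lemma finite_support_raySum {d : ℤ × ℤ} (hd : 0 < d.1) {N : ℤ} {h : ℤ × ℤ → M}
    (hfin : h.support.Finite) (hstrip : SupportedInStrip N h) (hghost : IsGhost d h) :
    (raySum d h).support.Finite := by
  refine ((finite_Icc 1 N).biUnion fun k _ =>
    hfin.preimage (add_left_injective (k • d)).injOn).subset fun p hp => ?_
  obtain ⟨k, hk : 0 < k, hne⟩ := exists_ne_zero_of_finsum_mem_ne_zero hp
  have hp1 := (supportedInStrip_raySum hd hstrip hghost p hp).1
  have := (hstrip _ hne).2
  simp only [Prod.fst_add, Prod.smul_fst, smul_eq_mul] at this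
  exact mem_biUnion (x := k) (mem_Icc.2 ⟨hk, by nlinarith⟩) hne

lemma exists_eq_sub_shift_of_isGhost {d : ℤ × ℤ} (hd : 0 < d.1) {N : ℤ} {h : ℤ × ℤ → M}
    (hfin : h.support.Finite) (hstrip : SupportedInStrip N h) (hghost : IsGhost d h) :
    ∃ h' : ℤ × ℤ → M, h'.support.Finite ∧ SupportedInStrip (N - d.1) h' ∧
      ∀ p, h p = h' (p - d) - h' p := by
  have hd0 : d ≠ 0 := by rintro rfl; exact hd.false
  refine ⟨raySum d h, finite_support_raySum hd hfin hstrip hghost,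
    supportedInStrip_raySum hd hstrip hghost, fun p => ?_⟩
  rw [raySum_sub_self hd0 hfin, add_sub_cancel_right]

lemma eq_zero_of_supportedInStrip_nonpos {N : ℤ} (hN : N ≤ 0) {h : ℤ × ℤ → M}
    (hstrip : SupportedInStrip N h) : h = 0 := by
  ext p
  by_contra hp
  have := hstrip p hp
  omega

theorem eq_zero_of_forall_isGhost (D : Finset (ℤ × ℤ)) (hpos : ∀ d ∈ D, 0 < d.1)
    (hcross : (D : Set (ℤ × ℤ)).Pairwise fun d e => cross d e ≠ 0) {N : ℤ} {h : ℤ × ℤ → M}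
    (hfin : h.support.Finite) (hstrip : SupportedInStrip N h) (hghost : ∀ d ∈ D, IsGhost d h)
    (hN : N ≤ ∑ d ∈ D, d.1) : h = 0 := by
  induction D using Finset.induction_on generalizing N h with
  | empty => exact eq_zero_of_supportedInStrip_nonpos hN hstrip
  | insert a D ha ih =>
    rw [Finset.coe_insert, Set.pairwise_insert] at hcross
    obtain ⟨h', hfin', hstrip', hrel⟩ := exists_eq_sub_shift_of_isGhost
      (hpos a (Finset.mem_insert_self a D)) hfin hstrip (hghost a (Finset.mem_insert_self a D))
    have hghost' : ∀ e ∈ D, IsGhost e h' := fun e he =>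
      (hghost e (Finset.mem_insert_of_mem he)).of_eq_sub_shift
        ((hcross.2 e he (ne_of_mem_of_not_mem he ha).symm).1) hfin' hrel
    have hzero : h' = 0 := ih (fun d hd => hpos d (Finset.mem_insert_of_mem hd)) hcross.1
      hfin' hstrip' hghost' (by rw [Finset.sum_insert ha] at hN; linarith)
    ext p
    simp [hrel p, hzero]

end

def slopeDir (r : ℚ) : ℤ × ℤ := (r.den, r.num)

lemma slopeDir_ne_zero (r : ℚ) : slopeDir r ≠ 0 := fun h => r.den_ne_zero (by
  simpa [slopeDir] using congrArg Prod.fst h)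

lemma isCoprime_slopeDir (r : ℚ) : IsCoprime (r.den : ℤ) r.num := by
  rw [Int.isCoprime_iff_gcd_eq_one, Int.gcd_comm]
  exact r.reduced

lemma slopeDir_injective : Injective slopeDir := fun r s h => by
  simp only [slopeDir, Prod.ext_iff, Nat.cast_inj] at h
  exact Rat.ext h.2 h.1

lemma cross_slopeDir_ne_zero {r s : ℚ} (hrs : r ≠ s) : cross (slopeDir r) (slopeDir s) ≠ 0 := by
  rw [cross, slopeDir, slopeDir, sub_ne_zero]
  intro h
  exact hrs (Rat.eq_iff_mul_eq_mul.2 (by linarith))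

theorem eq_zero_of_forall_isGhost_slopeDir {M : Type*} [AddCommGroup M] (R : Finset ℚ) {N : ℤ}
    {h : ℤ × ℤ → M} (hfin : h.support.Finite) (hstrip : SupportedInStrip N h)
    (hghost : ∀ r ∈ R, IsGhost (slopeDir r) h) (hN : N ≤ ∑ r ∈ R, (r.den : ℤ)) : h = 0 := by
  refine eq_zero_of_forall_isGhost (R.image slopeDir) ?_ ?_ hfin hstrip ?_ ?_
  · simp only [Finset.mem_image, forall_exists_index, and_imp, forall_apply_eq_imp_iff₂]
    exact fun r _ => Nat.cast_pos.2 r.pos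
  · rw [Finset.coe_image]
    exact Set.Pairwise.image fun r _ s _ hrs => cross_slopeDir_ne_zero hrs
  · simpa using hghost
  · rwa [Finset.sum_image slopeDir_injective.injOn]

noncomputable def grid (n m : ℕ) : Finset (ℤ × ℤ) := Finset.Icc 1 (n : ℤ) ×ˢ Finset.Icc 1 (m : ℤ)

lemma finite_support_indicator_grid {M : Type*} [Zero M] (n m : ℕ) (u : ℤ × ℤ → M) :
    ((grid n m : Set (ℤ × ℤ)).indicator u).support.Finite :=
  (grid n m).finite_toSet.subset support_indicator_subset

lemma supportedInStrip_indicator_grid {M : Type*} [Zero M] (n m : ℕ) (u : ℤ × ℤ → M) :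
    SupportedInStrip n ((grid n m : Set (ℤ × ℤ)).indicator u) := fun p hp => by
  have := support_indicator_subset hp
  simp only [grid, Finset.coe_product, Finset.coe_Icc, mem_prod, mem_Icc] at this
  omega

lemma exists_add_smul_slopeDir_iff (r : ℚ) (p x : ℤ × ℤ) :
    (∃ k : ℤ, p + k • slopeDir r = x) ↔ (x.2 : ℝ) = r * x.1 + (p.2 - r * p.1) := by
  have hr : (r : ℝ) * r.den = r.num := by exact_mod_cast Rat.mul_den_eq_num r
  constructor
  · rintro ⟨k, rfl⟩
    simp only [slopeDir, Prod.fst_add, Prod.snd_add, Prod.smul_mk, smul_eq_mul]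
    push_cast
    linear_combination -(k : ℝ) * hr
  · intro hx
    have hint : (r.den : ℤ) * (x.2 - p.2) = r.num * (x.1 - p.1) := by
      have : (r.den : ℝ) * (x.2 - p.2) = r.num * (x.1 - p.1) := by
        linear_combination (r.den : ℝ) * hx + ((x.1 : ℝ) - p.1) * hr
      exact_mod_cast this
    obtain ⟨k, hk⟩ := (isCoprime_slopeDir r).dvd_of_dvd_mul_left ⟨_, hint.symm⟩
    have hk2 : x.2 - p.2 = r.num * k := by
      refine mul_left_cancel₀ (Nat.cast_ne_zero.2 r.den_ne_zero) ?_
      rw [hint, hk]; ring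
    refine ⟨k, Prod.ext ?_ ?_⟩ <;>
      simp only [slopeDir, Prod.fst_add, Prod.snd_add, Prod.smul_mk, smul_eq_mul] <;> linarith

lemma lineSum_indicator_grid (n m : ℕ) (r : ℚ) (u : ℤ × ℤ → ℝ) (p : ℤ × ℤ) :
    lineSum (slopeDir r) ((grid n m : Set (ℤ × ℤ)).indicator u) p =
      clueSum n m (some r) (p.2 - r * p.1) u := by
  have hline : range (fun k : ℤ => p + k • slopeDir r) =
      {x : ℤ × ℤ | (x.2 : ℝ) = r * x.1 + (p.2 - r * p.1)} :=
    ext (exists_add_smul_slopeDir_iff r p)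
  have hinj : Injective fun k : ℤ => p + k • slopeDir r :=
    (add_right_injective p).comp (smul_left_injective ℤ (slopeDir_ne_zero r))
  rw [lineSum, ← finsum_mem_range (f := (grid n m : Set (ℤ × ℤ)).indicator u) hinj, hline,
    finsum_mem_def, indicator_indicator, ← finsum_mem_def, clueSum, ← finsum_mem_coe_finset, Finset.coe_filter, inter_comm]
  rfl

lemma clueSum_sub (n m : ℕ) (s : Slope) (c : ℝ) (f g : ℤ × ℤ → ℝ) :
    clueSum n m s c (f - g) = clueSum n m s c f - clueSum n m s c g := by
  simp only [clueSum, Pi.sub_apply, Finset.sum_sub_distrib]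

lemma isGhost_indicator_grid_sub {n m : ℕ} {r : ℚ} {f g : ℤ × ℤ → ℝ}
    (hfg : ∀ c : ℝ, clueSum n m (some r) c f = clueSum n m (some r) c g) :
    IsGhost (slopeDir r) ((grid n m : Set (ℤ × ℤ)).indicator (f - g)) := fun p => by
  rw [lineSum_indicator_grid, clueSum_sub, sub_eq_zero]
  exact hfg _

noncomputable def slopesCposInvQ (q : ℕ) : Finset ℚ :=
  (Finset.Icc (-(q : ℤ)) (q - 1)).image (↑) ∪
    (((Finset.Icc 2 q).image fun k : ℕ => (k : ℚ)⁻¹) ∪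
      ((Finset.Icc 2 q).image fun k : ℕ => -(k : ℚ)⁻¹))

lemma some_mem_CposInvQ {q : ℕ} {r : ℚ} (hr : r ∈ slopesCposInvQ q) : some r ∈ CposInvQ q := by
  simp only [CposInvQ, Set.mem_union, Set.mem_insert_iff, Set.mem_singleton_iff,
    Set.mem_ofPred_eq, Option.some.injEq, reduceCtorEq, or_false]
  simp only [slopesCposInvQ, Finset.mem_union, Finset.mem_image, Finset.mem_Icc] at hr
  rcases hr with ⟨k, hk, rfl⟩ | ⟨k, hk, rfl⟩ | ⟨k, hk, rfl⟩
  · rcases eq_or_ne k 0 with rfl | hk0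
    · simp
    rcases eq_or_ne k (-q) with rfl | hkq
    · simp
    exact Or.inl (Or.inr ⟨k, Int.one_le_abs hk0, abs_le.2 ⟨by omega, by omega⟩, Or.inl rfl⟩)
  · rcases eq_or_ne k q with rfl | hkq
    · simp
    refine Or.inl (Or.inr ⟨k, ?_, ?_, Or.inr (by simp)⟩) <;> rw [Nat.abs_cast] <;> omega
  · rcases eq_or_ne k q with rfl | hkq
    · simp
    refine Or.inl (Or.inr ⟨-k, ?_, ?_, Or.inr (by simp)⟩) <;> rw [abs_neg, Nat.abs_cast] <;> omega

lemma sum_den_image_inv_natCast {s : Finset ℕ} (hs : ∀ k ∈ s, 0 < k) :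
    ∑ r ∈ s.image (fun k : ℕ => (k : ℚ)⁻¹), r.den = ∑ k ∈ s, k := by
  rw [Finset.sum_image fun a _ b _ h => by simpa using h]
  exact Finset.sum_congr rfl fun k hk => Rat.inv_natCast_den_of_pos (hs k hk)

lemma sum_den_image_neg_inv_natCast {s : Finset ℕ} (hs : ∀ k ∈ s, 0 < k) :
    ∑ r ∈ s.image (fun k : ℕ => -(k : ℚ)⁻¹), r.den = ∑ k ∈ s, k := by
  rw [Finset.sum_image fun a _ b _ h => by simpa using h]
  exact Finset.sum_congr rfl fun k hk => by rw [Rat.neg_den, Rat.inv_natCast_den_of_pos (hs k hk)]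

lemma sum_Icc_two_mul_two (q : ℕ) : (∑ k ∈ Finset.Icc 2 q, k) * 2 = q * (q + 1) - 2 := by
  induction q with
  | zero => rfl
  | succ q ih =>
    rcases Nat.eq_zero_or_pos q with rfl | hq
    · rfl
    rw [Finset.sum_Icc_succ_top (by omega), add_mul, ih]
    have h2 : 2 ≤ q * (q + 1) := by nlinarith
    have h3 : 2 ≤ (q + 1) * (q + 1 + 1) := by nlinarith
    zify [h2, h3]
    ring

lemma sum_den_slopesCposInvQ (q : ℕ) : ∑ r ∈ slopesCposInvQ q, r.den = q ^ 2 + 3 * q - 2 := by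
  set A := (Finset.Icc (-(q : ℤ)) (q - 1)).image ((↑) : ℤ → ℚ)
  set B := (Finset.Icc 2 q).image fun k : ℕ => (k : ℚ)⁻¹
  set C := (Finset.Icc 2 q).image fun k : ℕ => -(k : ℚ)⁻¹
  have hpos : ∀ k ∈ Finset.Icc 2 q, 0 < k := fun k hk => by rw [Finset.mem_Icc] at hk; omega
  have hA : ∑ r ∈ A, r.den = 2 * q := by
    rw [Finset.sum_image Int.cast_injective.injOn]
    simp only [Rat.den_intCast, Finset.sum_const, Int.card_Icc, smul_eq_mul, mul_one]
    omega
  have hBC : Disjoint B C := Finset.disjoint_left.2 fun r hrB hrC => by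
    obtain ⟨k, hk, rfl⟩ := Finset.mem_image.1 hrB
    obtain ⟨j, hj, hjk⟩ := Finset.mem_image.1 hrC
    have : (0 : ℚ) < (k : ℚ)⁻¹ + (j : ℚ)⁻¹ := by
      have := hpos k hk; have := hpos j hj; positivity
    linarith
  have hABC : Disjoint A (B ∪ C) := Finset.disjoint_left.2 fun r hrA hrBC => by
    obtain ⟨k, -, rfl⟩ := Finset.mem_image.1 hrA
    rcases Finset.mem_union.1 hrBC with hr | hr <;>
    · obtain ⟨j, hj, hjk⟩ := Finset.mem_image.1 hr
      have := congrArg Rat.den hjk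
      simp only [Rat.neg_den, Rat.inv_natCast_den_of_pos (hpos j hj), Rat.den_intCast] at this
      rw [Finset.mem_Icc] at hj
      omega
  rw [slopesCposInvQ, Finset.sum_union hABC, Finset.sum_union hBC, hA,
    sum_den_image_inv_natCast hpos, sum_den_image_neg_inv_natCast hpos]
  have hsum := sum_Icc_two_mul_two q
  rcases Nat.eq_zero_or_pos q with rfl | hq
  · rfl
  have h2 : 2 ≤ q * (q + 1) := by nlinarith
  have h3 : 2 ≤ q ^ 2 + 3 * q := by nlinarith
  zify [h2, h3] at hsum ⊢
  linarith

theorem rk_unique_CposInvQ_general (q : ℕ) (n : ℕ)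
    (hnq : n ≤ q ^ 2 + 3 * q - 2) :
    ∀ f g : ℤ × ℤ → ℝ, ClueEquiv n n (CposInvQ q) f g →
      ∀ p : ℤ × ℤ, 1 ≤ p.1 → p.1 ≤ (n : ℤ) → 1 ≤ p.2 → p.2 ≤ (n : ℤ) → f p = g p := by
  intro f g hfg p hp₁ hp₁n hp₂ hp₂n
  have hzero : (grid n n : Set (ℤ × ℤ)).indicator (f - g) = 0 :=
    eq_zero_of_forall_isGhost_slopeDir (slopesCposInvQ q)
      (finite_support_indicator_grid n n _) (supportedInStrip_indicator_grid n n _)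
      (fun r hr => isGhost_indicator_grid_sub (hfg _ (some_mem_CposInvQ hr)))
      (by rw [← Nat.cast_sum, sum_den_slopesCposInvQ]; exact_mod_cast hnq)
  have hp : p ∈ (grid n n : Set (ℤ × ℤ)) := by
    simp only [grid, Finset.coe_product, Finset.coe_Icc, mem_prod, mem_Icc]
    omega
  simpa [indicator_of_mem hp, sub_eq_zero] using congrFun hzero p

/-- if `q ≥ 2` and `n ≤ q² + 3q − 2`, then every entry of `I_{n,n}` is
uniquely solvable with respect to `C_{1/q}`; equivalently every solvable `n × n` RK puzzle
with clue slopes `C_{1/q}` has a unique solution. -/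
theorem rk_unique_CposInvQ (q : ℕ) (hq : 2 ≤ q) (n : ℕ) (hn : 0 < n)
    (hnq : n ≤ q ^ 2 + 3 * q - 2) :
    ∀ f g : ℤ × ℤ → ℝ, ClueEquiv n n (CposInvQ q) f g →
      ∀ p : ℤ × ℤ, 1 ≤ p.1 → p.1 ≤ (n : ℤ) → 1 ≤ p.2 → p.2 ≤ (n : ℤ) → f p = g p :=
  rk_unique_CposInvQ_general q n hnq
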